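/- Let n, m ≥ 1, 0 < β ≤ 1, α ≤ 1, γ < β, and assume additionally α + γ < β in the case 0 < α ≤ 1. Let α = α₁+⋯+α_m where either (i) α₁,…,α_m < 0 and α < 0, or (ii) α₁ = ⋯ = α_m = 0 and α = 0, or (iii) α₁,…,α_m > 0 and α > 0. Let f₁,…,f_m : ℝⁿ → ℝ be locally integrable with finite Campanato norms ‖f_i‖_{E^{α_i,1}}. Let B = B(x₀,r) be a ball and x ∈ B. Then ∫ over the complement of B(x,8r)^m in (ℝⁿ)^m of r^β ∏_{i=1}^m |f_i(y_i) − (f_i)_B| / (Σ_{j=1}^m |x−y_j|)^{mn+β−γ} dy⃗ ≤ c r^{α+γ} ∏_{i=1}^m ‖f_i‖_{E^{α_i,1}}, with c independent of f⃗, B, x and r. -/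

import Mathlib

open MeasureTheory Metric ENNReal

noncomputable def ballAvg (n : ℕ) (f : EuclideanSpace ℝ (Fin n) → ℝ)
    (c : EuclideanSpace ℝ (Fin n)) (r : ℝ) : ℝ :=
  (volume (closedBall c r)).toReal⁻¹ * ∫ y in closedBall c r, f y

noncomputable def bmoNorm (n : ℕ) (f : EuclideanSpace ℝ (Fin n) → ℝ) : ℝ≥0∞ :=
  ⨆ (c : EuclideanSpace ℝ (Fin n)) (r : ℝ) (_ : 0 < r),
    ENNReal.ofReal ((volume (closedBall c r)).toReal⁻¹ *
      ∫ y in closedBall c r, |f y - ballAvg n f c r|)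

noncomputable def campanatoNorm (n : ℕ) (α p : ℝ) (f : EuclideanSpace ℝ (Fin n) → ℝ) : ℝ≥0∞ :=
  ⨆ (c : EuclideanSpace ℝ (Fin n)) (r : ℝ) (_ : 0 < r),
    ENNReal.ofReal ((volume (closedBall c r)).toReal ^ (-(α / n)) *
      ((volume (closedBall c r)).toReal⁻¹ *
        ∫ y in closedBall c r, |f y - ballAvg n f c r| ^ p) ^ (1 / p))

noncomputable def campanato1Norm (n : ℕ) (α : ℝ) (f : EuclideanSpace ℝ (Fin n) → ℝ) : ℝ≥0∞ :=
  ⨆ (c : EuclideanSpace ℝ (Fin n)) (r : ℝ) (_ : 0 < r),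
    ENNReal.ofReal ((volume (closedBall c r)).toReal ^ (-(α / n)) *
      ((volume (closedBall c r)).toReal⁻¹ *
        ∫ y in closedBall c r, |f y - ballAvg n f c r|))

noncomputable def lipNorm (n : ℕ) (γ : ℝ) (f : EuclideanSpace ℝ (Fin n) → ℝ) : ℝ≥0∞ :=
  ⨆ (x : EuclideanSpace ℝ (Fin n)) (y : EuclideanSpace ℝ (Fin n)) (_ : x ≠ y),
    ENNReal.ofReal (|f x - f y| / ‖x - y‖ ^ γ)

/-!
Cut the complement of `B(x, 8r)^m` into the dyadic shells `B(x, 2^(k+1)·8r)^m \ B(x, 2^k·8r)^m`.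
On the `k`-th shell the kernel is at most `(2^k·8r)^(-(mn+β-γ))`, and what is left is an integral
over the box `B(x, 2^(k+4) r)^m` which factors into one-variable integrals. Each of those is
controlled by telescoping the ball averages along `B(x₀, r) ⊆ B(x, 2r) ⊆ B(x, 4r) ⊆ ⋯`: this costs
a factor `(k+4)·2^((k+4)·max(αᵢ, 0))` on top of the Campanato scaling `(2^(k+4) r)^(n+αᵢ)`.
So the `k`-th shell contributes `≲ r^(α+γ) (k+4)^m q^(k+4)` with `q = 2^(∑ max(αᵢ, 0) + γ - β)`,
and the sign conditions on the `αᵢ` are exactly what makes `q < 1`.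
-/

lemma compl_closedBall_subset_iUnion_annulus {X : Type*} [PseudoMetricSpace X] (z : X) {R : ℝ}
    (hR : 0 < R) :
    (closedBall z R)ᶜ ⊆ ⋃ k : ℕ, closedBall z (2 ^ (k + 1) * R) \ closedBall z (2 ^ k * R) := by
  classical
  intro y hy
  have hex : ∃ k : ℕ, y ∈ closedBall z (2 ^ k * R) := by
    obtain ⟨k, hk⟩ := pow_unbounded_of_one_lt (dist y z / R) one_lt_two
    exact ⟨k, mem_closedBall.2 ((div_lt_iff₀ hR).1 hk).le⟩
  obtain ⟨j, hj⟩ : ∃ j, Nat.find hex = j + 1 := by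
    refine Nat.exists_eq_succ_of_ne_zero fun h => hy ?_
    simpa using (Nat.find_eq_zero hex).1 h
  exact Set.mem_iUnion.2 ⟨j, hj ▸ Nat.find_spec hex, Nat.find_min hex (by omega)⟩

lemma compl_pi_closedBall_subset_iUnion_annulus {ι X : Type*} [Fintype ι] [PseudoMetricSpace X]
    (x : X) {R : ℝ} (hR : 0 < R) :
    (Set.univ.pi fun _ : ι => closedBall x R)ᶜ ⊆
      ⋃ k : ℕ, (Set.univ.pi fun _ : ι => closedBall x (2 ^ (k + 1) * R)) \
        Set.univ.pi fun _ : ι => closedBall x (2 ^ k * R) := by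
  intro y hy
  rw [← closedBall_pi _ hR.le] at hy
  obtain ⟨k, hk⟩ := Set.mem_iUnion.1 (compl_closedBall_subset_iUnion_annulus _ hR hy)
  refine Set.mem_iUnion.2 ⟨k, ?_⟩
  rwa [← closedBall_pi _ (by positivity), ← closedBall_pi _ (by positivity)]

lemma measureReal_closedBall_pos {X : Type*} [PseudoMetricSpace X] [ProperSpace X]
    [MeasurableSpace X] {μ : Measure X} [μ.IsOpenPosMeasure] [IsFiniteMeasureOnCompacts μ]
    (x : X) {r : ℝ} (hr : 0 < r) : 0 < μ.real (closedBall x r) :=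
  ENNReal.toReal_pos (measure_closedBall_pos μ x hr).ne' measure_closedBall_lt_top.ne

lemma setIntegral_abs_sub_le_add {X : Type*} [MeasurableSpace X] {μ : Measure X} {s : Set X}
    (hs : μ s ≠ ⊤) {f : X → ℝ} (hf : IntegrableOn f s μ) (c c' : ℝ) :
    ∫ y in s, |f y - c| ∂μ ≤ ∫ y in s, |f y - c'| ∂μ + μ.real s * |c' - c| := by
  have hf' : IntegrableOn (fun y => |f y - c'|) s μ := (hf.sub (integrableOn_const hs)).abs
  calc ∫ y in s, |f y - c| ∂μ ≤ ∫ y in s, (|f y - c'| + |c' - c|) ∂μ :=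
        setIntegral_mono (hf.sub (integrableOn_const hs)).abs (hf'.add (integrableOn_const hs))
          fun y => abs_sub_le _ _ _
    _ = _ := by rw [integral_add hf' (integrableOn_const hs), setIntegral_const, smul_eq_mul]

lemma lintegral_pi_prod_abs {ι X : Type*} [Fintype ι] [MeasurableSpace X] {μ : Measure X}
    [SigmaFinite μ] {s : Set X} {g : ι → X → ℝ} (hg : ∀ i, IntegrableOn (g i) s μ) :
    ∫⁻ y in Set.univ.pi fun _ => s, ENNReal.ofReal (∏ i, |g i (y i)|) ∂(Measure.pi fun _ => μ) =
      ENNReal.ofReal (∏ i, ∫ z in s, |g i z| ∂μ) := by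
  rw [Measure.restrict_pi_pi, ← integral_fintype_prod_eq_prod]
  refine (ofReal_integral_eq_lintegral_ofReal ?_ ?_).symm
  · exact Integrable.fintype_prod fun i => (hg i).abs
  · exact Filter.Eventually.of_forall fun y => Finset.prod_nonneg fun i _ => abs_nonneg _

lemma lintegral_annulus_le {ι E : Type*} [Fintype ι] [NormedAddCommGroup E] [MeasurableSpace E]
    [OpensMeasurableSpace E] {μ : Measure E} [SigmaFinite μ] (x : E) {ρ p c : ℝ} (hρ : 0 < ρ)
    (hp : 0 ≤ p) (hc : 0 ≤ c) {g : ι → E → ℝ}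
    (hg : ∀ i, IntegrableOn (g i) (closedBall x (2 * ρ)) μ) :
    ∫⁻ y in (Set.univ.pi fun _ : ι => closedBall x (2 * ρ)) \
        Set.univ.pi fun _ : ι => closedBall x ρ,
        ENNReal.ofReal (c * (∏ i, |g i (y i)|) / (∑ j, ‖x - y j‖) ^ p) ∂(Measure.pi fun _ => μ) ≤
      ENNReal.ofReal (c / ρ ^ p * ∏ i, ∫ z in closedBall x (2 * ρ), |g i z| ∂μ) := by
  have hkernel : ∀ y ∈ (Set.univ.pi fun _ : ι => closedBall x (2 * ρ)) \
      Set.univ.pi fun _ : ι => closedBall x ρ,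
      ENNReal.ofReal (c * (∏ i, |g i (y i)|) / (∑ j, ‖x - y j‖) ^ p) ≤
        ENNReal.ofReal (c / ρ ^ p) * ENNReal.ofReal (∏ i, |g i (y i)|) := by
    rintro y ⟨-, hy⟩
    obtain ⟨j, hj⟩ := not_forall.1 (Set.mem_univ_pi.not.1 hy)
    have hρj : ρ ≤ ∑ j, ‖x - y j‖ := by
      refine le_trans ?_ (Finset.single_le_sum (fun j _ => norm_nonneg (x - y j))
        (Finset.mem_univ j))
      rw [← dist_eq_norm, dist_comm]
      exact (not_le.1 hj).le
    rw [← ENNReal.ofReal_mul (by positivity), div_mul_eq_mul_div]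
    gcongr
  calc _ ≤ ∫⁻ y in (Set.univ.pi fun _ : ι => closedBall x (2 * ρ)) \
          Set.univ.pi fun _ : ι => closedBall x ρ,
          ENNReal.ofReal (c / ρ ^ p) * ENNReal.ofReal (∏ i, |g i (y i)|) ∂(Measure.pi fun _ => μ) :=
        setLIntegral_mono' ((MeasurableSet.univ_pi fun _ => measurableSet_closedBall).diff
          (MeasurableSet.univ_pi fun _ => measurableSet_closedBall)) hkernel
    _ ≤ ∫⁻ y in Set.univ.pi fun _ : ι => closedBall x (2 * ρ),
          ENNReal.ofReal (c / ρ ^ p) * ENNReal.ofReal (∏ i, |g i (y i)|) ∂(Measure.pi fun _ => μ) :=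
        lintegral_mono_set Set.sdiff_subset
    _ = _ := by
        rw [lintegral_const_mul' _ _ ENNReal.ofReal_ne_top, lintegral_pi_prod_abs hg,
          ← ENNReal.ofReal_mul (by positivity)]

lemma rpow_two_pow_mul_le {a r : ℝ} (hr : 0 < r) {j N : ℕ} (hj : j ≤ N) :
    (2 ^ j * r) ^ a ≤ ((2 : ℝ) ^ max a 0) ^ N * r ^ a := by
  have h1 : (1 : ℝ) ≤ 2 ^ max a 0 := Real.one_le_rpow one_le_two (le_max_right a 0)
  rw [Real.mul_rpow (by positivity) hr.le, ← Real.rpow_pow_comm zero_le_two]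
  gcongr
  calc ((2 : ℝ) ^ a) ^ j ≤ ((2 : ℝ) ^ max a 0) ^ j :=
        pow_le_pow_left₀ (by positivity)
          (Real.rpow_le_rpow_of_exponent_le one_le_two (le_max_left a 0)) j
    _ ≤ _ := pow_le_pow_right₀ h1 hj

lemma rpow_div_rpow_mul_pow_dyadic {r β γ : ℝ} (hr : 0 < r) (N k : ℕ) :
    r ^ β / (2 ^ k * (8 * r)) ^ ((N : ℝ) + β - γ) * (2 * (2 ^ k * (8 * r))) ^ N =
      2 ^ ((N : ℝ) + β - γ) * ((2 : ℝ) ^ (γ - β)) ^ (k + 4) * r ^ γ := by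
  obtain ⟨d, rfl⟩ : ∃ d, γ = β - d := ⟨β - γ, by ring⟩
  have hu : 2 ^ k * (8 * r) = 2 ^ (k + 3) * r := by ring
  rw [show (N : ℝ) + β - (β - d) = N + d by ring, show β - d - β = -d by ring, hu,
    Real.rpow_add (by positivity), Real.rpow_add two_pos, Real.rpow_natCast, Real.rpow_natCast,
    Real.mul_rpow (by positivity) hr.le, ← Real.rpow_pow_comm zero_le_two,
    Real.rpow_neg zero_le_two, Real.rpow_sub hr, inv_pow]
  field_simp
  rw [mul_pow (2 ^ (k + 3) * r) 2 N]
  ring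

lemma summable_add_pow_mul_geometric (m : ℕ) {q : ℝ} (hq0 : 0 ≤ q) (hq1 : q < 1) :
    Summable fun k : ℕ => ((k : ℝ) + 4) ^ m * q ^ (k + 4) := by
  have hq : ‖q‖ < 1 := by rwa [Real.norm_of_nonneg hq0]
  have h := (summable_nat_add_iff (f := fun j : ℕ => (j : ℝ) ^ m * q ^ j) 4).2
    (summable_pow_mul_geometric_of_norm_lt_one m hq)
  exact h.congr fun k => by simp

lemma sum_max_zero_add_lt {ι : Type*} [Fintype ι] {α : ι → ℝ} {β γ : ℝ} (hγ : γ < β)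
    (hcase : 0 < ∑ i, α i → (∑ i, α i) + γ < β)
    (hsign : ((∀ i, α i < 0) ∧ (∑ i, α i) < 0) ∨ (∀ i, α i = 0) ∨
      ((∀ i, 0 < α i) ∧ 0 < ∑ i, α i)) :
    ∑ i, max (α i) 0 + γ < β := by
  rcases hsign with ⟨hneg, -⟩ | hzero | ⟨hpos, hsum⟩
  · simpa [fun i => max_eq_right (hneg i).le] using hγ
  · simpa [hzero] using hγ
  · simpa [fun i => max_eq_left (hpos i).le] using hcase hsum

noncomputable def unitBallVolume (n : ℕ) : ℝ :=
  volume.real (closedBall (0 : EuclideanSpace ℝ (Fin n)) 1)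

lemma unitBallVolume_pos (n : ℕ) : 0 < unitBallVolume n :=
  measureReal_closedBall_pos _ one_pos

lemma volume_real_closedBall {n : ℕ} (c : EuclideanSpace ℝ (Fin n)) {ρ : ℝ} (hρ : 0 ≤ ρ) :
    volume.real (closedBall c ρ) = ρ ^ n * unitBallVolume n := by
  rw [Measure.addHaar_real_closedBall' _ _ hρ, finrank_euclideanSpace_fin, unitBallVolume]

section Campanato

variable {n : ℕ} {f : EuclideanSpace ℝ (Fin n) → ℝ} {a : ℝ}

lemma setIntegral_abs_sub_ballAvg_le (hn : 0 < n) (hf : campanato1Norm n a f ≠ ⊤)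
    (c : EuclideanSpace ℝ (Fin n)) {R : ℝ} (hR : 0 < R) :
    ∫ y in closedBall c R, |f y - ballAvg n f c R| ≤
      (campanato1Norm n a f).toReal * unitBallVolume n ^ (1 + a / n) * R ^ (n + a) := by
  set V := volume.real (closedBall c R)
  set I := ∫ y in closedBall c R, |f y - ballAvg n f c R|
  have hV : 0 < V := measureReal_closedBall_pos c hR
  have hI : V ^ (-(a / n)) * (V⁻¹ * I) ≤ (campanato1Norm n a f).toReal :=
    (ENNReal.ofReal_le_iff_le_toReal hf).1 (le_iSup₂_of_le c R (le_iSup_of_le hR le_rfl))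
  have hVpow : V ^ (1 + a / n) = unitBallVolume n ^ (1 + a / n) * R ^ (n + a) := by
    rw [show V = _ from volume_real_closedBall c hR.le,
      Real.mul_rpow (by positivity) (unitBallVolume_pos n).le, ← Real.rpow_natCast,
      ← Real.rpow_mul hR.le, mul_comm]
    congr 2
    field_simp
  calc I = V ^ (1 + a / n) * (V ^ (-(a / n)) * (V⁻¹ * I)) := by
        rw [← mul_assoc, ← Real.rpow_add hV, add_neg_cancel_right, Real.rpow_one,
          mul_inv_cancel_left₀ hV.ne']
    _ ≤ V ^ (1 + a / n) * (campanato1Norm n a f).toReal := by gcongr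
    _ = _ := by rw [hVpow]; ring

lemma abs_ballAvg_sub_ballAvg_le (hf : LocallyIntegrable f volume)
    {c c' : EuclideanSpace ℝ (Fin n)} {ρ ρ' : ℝ} (hρ : 0 < ρ)
    (hsub : closedBall c ρ ⊆ closedBall c' ρ') :
    |ballAvg n f c ρ - ballAvg n f c' ρ'| ≤
      (volume.real (closedBall c ρ))⁻¹ * ∫ y in closedBall c' ρ', |f y - ballAvg n f c' ρ'| := by
  have hV : 0 < volume.real (closedBall c ρ) := measureReal_closedBall_pos c hρ
  have hint : IntegrableOn f (closedBall c ρ) :=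
    hf.integrableOn_isCompact (isCompact_closedBall _ _)
  have hint' : IntegrableOn (fun y => |f y - ballAvg n f c' ρ'|) (closedBall c' ρ') :=
    ((hf.integrableOn_isCompact (isCompact_closedBall _ _)).sub (integrableOn_const
      measure_closedBall_lt_top.ne)).abs
  have hdiff : ballAvg n f c ρ - ballAvg n f c' ρ' = (volume.real (closedBall c ρ))⁻¹ *
      ∫ y in closedBall c ρ, (f y - ballAvg n f c' ρ') := by
    rw [integral_sub hint (integrableOn_const measure_closedBall_lt_top.ne), setIntegral_const,
      smul_eq_mul, mul_sub, inv_mul_cancel_left₀ hV.ne', ballAvg, measureReal_def]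
  rw [hdiff, abs_mul, abs_of_pos (inv_pos.2 hV)]
  gcongr
  calc |∫ y in closedBall c ρ, (f y - ballAvg n f c' ρ')|
      ≤ ∫ y in closedBall c ρ, |f y - ballAvg n f c' ρ'| := abs_integral_le_integral_abs
    _ ≤ _ := setIntegral_mono_set hint' (Filter.Eventually.of_forall fun _ => abs_nonneg _)
        hsub.eventuallyLE

lemma abs_ballAvg_sub_ballAvg_le_campanato (hn : 0 < n) (hf : LocallyIntegrable f volume)
    (hfin : campanato1Norm n a f ≠ ⊤) {c c' : EuclideanSpace ℝ (Fin n)} {ρ ρ' : ℝ}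
    (hρ : 0 < ρ) (hρ' : 0 < ρ') (hsub : closedBall c ρ ⊆ closedBall c' ρ') :
    |ballAvg n f c ρ - ballAvg n f c' ρ'| ≤
      (campanato1Norm n a f).toReal * unitBallVolume n ^ (a / n) * (ρ' / ρ) ^ n * ρ' ^ a := by
  have hω := unitBallVolume_pos n
  calc _ ≤ (volume.real (closedBall c ρ))⁻¹ *
        ((campanato1Norm n a f).toReal * unitBallVolume n ^ (1 + a / n) * ρ' ^ (n + a)) := by
        grw [abs_ballAvg_sub_ballAvg_le hf hρ hsub, setIntegral_abs_sub_ballAvg_le hn hfin c' hρ']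
    _ = _ := by
        rw [volume_real_closedBall c hρ.le, Real.rpow_add hω, Real.rpow_add hρ', Real.rpow_one,
          Real.rpow_natCast, div_pow]
        field_simp

lemma abs_ballAvg_dyadic_sub_ballAvg_le (hn : 0 < n) (hf : LocallyIntegrable f volume)
    (hfin : campanato1Norm n a f ≠ ⊤) {x₀ x : EuclideanSpace ℝ (Fin n)} {r : ℝ} (hr : 0 < r)
    (hx : x ∈ closedBall x₀ r) (N : ℕ) :
    |ballAvg n f x (2 ^ (N + 1) * r) - ballAvg n f x₀ r| ≤
      2 ^ n * (campanato1Norm n a f).toReal * unitBallVolume n ^ (a / n) *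
        ∑ j ∈ Finset.range (N + 1), (2 ^ (j + 1) * r) ^ a := by
  induction N with
  | zero =>
    have hsub : closedBall x₀ r ⊆ closedBall x (2 ^ 1 * r) := by
      refine closedBall_subset_closedBall' ?_
      rw [dist_comm]
      linarith [mem_closedBall.1 hx]
    have h := abs_ballAvg_sub_ballAvg_le_campanato (a := a) hn hf hfin hr (by positivity) hsub
    rw [mul_div_cancel_right₀ _ hr.ne', abs_sub_comm] at h
    refine h.trans_eq ?_
    rw [Finset.sum_range_one]
    ring
  | succ N ih =>
    have hsub : closedBall x (2 ^ (N + 1) * r) ⊆ closedBall x (2 ^ (N + 2) * r) :=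
      closedBall_subset_closedBall (by gcongr <;> norm_num)
    have hstep := abs_ballAvg_sub_ballAvg_le_campanato (a := a) hn hf hfin (by positivity)
      (by positivity) hsub
    have hratio : 2 ^ (N + 2) * r / (2 ^ (N + 1) * r) = 2 := by field_simp; ring
    rw [hratio, abs_sub_comm] at hstep
    calc _ ≤ _ := abs_sub_le _ (ballAvg n f x (2 ^ (N + 1) * r)) _
      _ ≤ _ := add_le_add hstep ih
      _ = _ := by rw [Finset.sum_range_succ _ (N + 1)]; ring

lemma setIntegral_abs_sub_ballAvg_dyadic_le (hn : 0 < n) (hf : LocallyIntegrable f volume)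
    (hfin : campanato1Norm n a f ≠ ⊤) {x₀ x : EuclideanSpace ℝ (Fin n)} {r : ℝ} (hr : 0 < r)
    (hx : x ∈ closedBall x₀ r) (N : ℕ) :
    ∫ y in closedBall x (2 ^ (N + 1) * r), |f y - ballAvg n f x₀ r| ≤
      (1 + 2 ^ n) * unitBallVolume n ^ (1 + a / n) * (campanato1Norm n a f).toReal * (N + 1) *
        (2 ^ (N + 1) * r) ^ n * (((2 : ℝ) ^ max a 0) ^ (N + 1) * r ^ a) := by
  set ρ : ℝ := 2 ^ (N + 1) * r
  set M : ℝ := ((2 : ℝ) ^ max a 0) ^ (N + 1) * r ^ a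
  set K := (campanato1Norm n a f).toReal
  have hρ : 0 < ρ := by positivity
  have hω := unitBallVolume_pos n
  have hρa : ρ ^ a ≤ M := rpow_two_pow_mul_le hr le_rfl
  have hsum : ∑ j ∈ Finset.range (N + 1), (2 ^ (j + 1) * r) ^ a ≤ (N + 1) * M := by
    calc _ ≤ ∑ _j ∈ Finset.range (N + 1), M := Finset.sum_le_sum fun j hj =>
          rpow_two_pow_mul_le hr (Nat.succ_le_of_lt (Finset.mem_range.1 hj))
      _ = _ := by simp
  have hint : IntegrableOn f (closedBall x ρ) :=
    hf.integrableOn_isCompact (isCompact_closedBall _ _)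
  calc _ ≤ (∫ y in closedBall x ρ, |f y - ballAvg n f x ρ|) +
        volume.real (closedBall x ρ) * |ballAvg n f x ρ - ballAvg n f x₀ r| :=
        setIntegral_abs_sub_le_add measure_closedBall_lt_top.ne hint _ _
    _ ≤ K * unitBallVolume n ^ (1 + a / n) * ρ ^ (n + a) + ρ ^ n * unitBallVolume n *
        (2 ^ n * K * unitBallVolume n ^ (a / n) *
          ∑ j ∈ Finset.range (N + 1), (2 ^ (j + 1) * r) ^ a) := by
        grw [setIntegral_abs_sub_ballAvg_le hn hfin x hρ, volume_real_closedBall x hρ.le,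
          abs_ballAvg_dyadic_sub_ballAvg_le hn hf hfin hr hx N]
    _ = K * unitBallVolume n ^ (1 + a / n) * ρ ^ n *
        (ρ ^ a + 2 ^ n * ∑ j ∈ Finset.range (N + 1), (2 ^ (j + 1) * r) ^ a) := by
        rw [Real.rpow_add hρ, Real.rpow_add hω, Real.rpow_one, Real.rpow_natCast]
        ring
    _ ≤ K * unitBallVolume n ^ (1 + a / n) * ρ ^ n * (M + 2 ^ n * ((N + 1) * M)) := by
        gcongr
    _ ≤ K * unitBallVolume n ^ (1 + a / n) * ρ ^ n * ((1 + 2 ^ n) * (N + 1) * M) := by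
        gcongr
        nlinarith [(by positivity : (0 : ℝ) ≤ N * M)]
    _ = _ := by ring

end Campanato

lemma lintegral_dyadic_annulus_le {n m : ℕ} (hn : 0 < n) {β γ : ℝ} (hγ : γ < β) {α : Fin m → ℝ}
    {f : Fin m → EuclideanSpace ℝ (Fin n) → ℝ} (hf : ∀ i, LocallyIntegrable (f i) volume)
    (hfin : ∀ i, campanato1Norm n (α i) (f i) ≠ ⊤) {x₀ x : EuclideanSpace ℝ (Fin n)} {r : ℝ}
    (hr : 0 < r) (hx : x ∈ closedBall x₀ r) (k : ℕ) :
    ∫⁻ y in (Set.univ.pi fun _ : Fin m => closedBall x (2 ^ (k + 1) * (8 * r))) \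
        Set.univ.pi fun _ : Fin m => closedBall x (2 ^ k * (8 * r)),
        ENNReal.ofReal (r ^ β * (∏ i, |f i (y i) - ballAvg n (f i) x₀ r|) /
          (∑ j, ‖x - y j‖) ^ ((m : ℝ) * (n : ℝ) + β - γ)) ≤
      ENNReal.ofReal (2 ^ ((m : ℝ) * (n : ℝ) + β - γ) *
        (∏ i, (1 + 2 ^ n) * unitBallVolume n ^ (1 + α i / n)) *
        (∏ i, (campanato1Norm n (α i) (f i)).toReal) * r ^ ((∑ i, α i) + γ) *
        (((k : ℝ) + 4) ^ m * ((2 : ℝ) ^ (∑ i, max (α i) 0 + γ - β)) ^ (k + 4))) := by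
  have hp : (m : ℝ) * n + β - γ = ((n * m : ℕ) : ℝ) + β - γ := by push_cast; ring
  have hp0 : 0 ≤ (m : ℝ) * n + β - γ := by
    have : (0 : ℝ) ≤ m * n := by positivity
    linarith
  have hdev : ∀ i, ∫ z in closedBall x (2 * (2 ^ k * (8 * r))), |f i z - ballAvg n (f i) x₀ r| ≤
      (1 + 2 ^ n) * unitBallVolume n ^ (1 + α i / n) * (campanato1Norm n (α i) (f i)).toReal *
        ((k : ℝ) + 4) * (2 * (2 ^ k * (8 * r))) ^ n *
          (((2 : ℝ) ^ max (α i) 0) ^ (k + 4) * r ^ α i) := by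
    intro i
    have h := setIntegral_abs_sub_ballAvg_dyadic_le hn (hf i) (hfin i) hr hx (k + 3)
    rw [show (2 : ℝ) ^ (k + 3 + 1) * r = 2 * (2 ^ k * (8 * r)) by ring] at h
    exact h.trans_eq (by push_cast; ring)
  rw [show (2 : ℝ) ^ (k + 1) * (8 * r) = 2 * (2 ^ k * (8 * r)) by ring]
  refine (lintegral_annulus_le (μ := volume) x (by positivity) hp0 (by positivity)
    (g := fun i z => f i z - ballAvg n (f i) x₀ r) fun i =>
      ((hf i).integrableOn_isCompact (isCompact_closedBall _ _)).sub
        (integrableOn_const measure_closedBall_lt_top.ne)).trans (ENNReal.ofReal_le_ofReal ?_)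
  calc _ ≤ r ^ β / (2 ^ k * (8 * r)) ^ ((m : ℝ) * n + β - γ) * ∏ i, ((1 + 2 ^ n) *
        unitBallVolume n ^ (1 + α i / n) * (campanato1Norm n (α i) (f i)).toReal *
        ((k : ℝ) + 4) * (2 * (2 ^ k * (8 * r))) ^ n *
          (((2 : ℝ) ^ max (α i) 0) ^ (k + 4) * r ^ α i)) := by
        gcongr with i
        exact hdev i
    _ = _ := by
        simp only [Finset.prod_mul_distrib, Finset.prod_const, Finset.card_univ,
          Fintype.card_fin, Finset.prod_pow, ← Real.rpow_sum_of_pos two_pos,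
          ← Real.rpow_sum_of_pos hr]
        rw [← pow_mul, hp, show ∑ i, max (α i) 0 + γ - β = ∑ i, max (α i) 0 + (γ - β) by ring,
          Real.rpow_add two_pos, Real.rpow_add hr, mul_pow]
        have key := rpow_div_rpow_mul_pow_dyadic (β := β) (γ := γ) hr (n * m) k
        generalize 2 ^ k * (8 * r) = ρ at key ⊢
        linear_combination ((1 + 2 ^ n) ^ m * (∏ i, unitBallVolume n ^ (1 + α i / n)) *
          (∏ i, (campanato1Norm n (α i) (f i)).toReal) * ((k : ℝ) + 4) ^ m *
          ((2 : ℝ) ^ ∑ i, max (α i) 0) ^ (k + 4) * r ^ ∑ i, α i) * key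

theorem stmt8_general (n m : ℕ) (hn : 1 ≤ n)
    (β γ : ℝ) (hγ : γ < β)
    (α : Fin m → ℝ)
    (hcase : 0 < ∑ i, α i → (∑ i, α i) + γ < β)
    (hsign : ((∀ i, α i < 0) ∧ (∑ i, α i) < 0) ∨ (∀ i, α i = 0) ∨
      ((∀ i, 0 < α i) ∧ 0 < ∑ i, α i)) :
    ∃ c > (0 : ℝ), ∀ f : Fin m → EuclideanSpace ℝ (Fin n) → ℝ,
      (∀ i, LocallyIntegrable (f i) volume) →
      (∀ i, campanato1Norm n (α i) (f i) < ⊤) →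
      ∀ (x₀ x : EuclideanSpace ℝ (Fin n)) (r : ℝ), 0 < r → x ∈ closedBall x₀ r →
        ∫⁻ y in (Set.univ.pi fun _ : Fin m => closedBall x (8 * r))ᶜ,
            ENNReal.ofReal (r ^ β * (∏ i, |f i (y i) - ballAvg n (f i) x₀ r|) /
              (∑ j, ‖x - y j‖) ^ ((m : ℝ) * (n : ℝ) + β - γ)) ≤
          ENNReal.ofReal (c * r ^ ((∑ i, α i) + γ) *
            ∏ i, (campanato1Norm n (α i) (f i)).toReal) := by
  set q : ℝ := 2 ^ (∑ i, max (α i) 0 + γ - β)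
  have hq : q < 1 := Real.rpow_lt_one_of_one_lt_of_neg one_lt_two
    (by linarith [sum_max_zero_add_lt hγ hcase hsign])
  set w : ℕ → ℝ := fun k => ((k : ℝ) + 4) ^ m * q ^ (k + 4)
  have hw : Summable w := summable_add_pow_mul_geometric m (by positivity) hq
  set C : ℝ := 2 ^ ((m : ℝ) * n + β - γ) * ∏ i, (1 + 2 ^ n) * unitBallVolume n ^ (1 + α i / n)
  have hC : 0 < C := mul_pos (by positivity) (Finset.prod_pos fun i _ =>
    mul_pos (by positivity) (Real.rpow_pos_of_pos (unitBallVolume_pos n) _))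
  refine ⟨C * ∑' k, w k, mul_pos hC (hw.tsum_pos (fun k => by positivity) 0 (by positivity)), ?_⟩
  intro f hf hfin x₀ x r hr hx
  calc _ ≤ ∑' k : ℕ, ∫⁻ y in (Set.univ.pi fun _ : Fin m => closedBall x (2 ^ (k + 1) * (8 * r))) \
          Set.univ.pi fun _ : Fin m => closedBall x (2 ^ k * (8 * r)),
          ENNReal.ofReal (r ^ β * (∏ i, |f i (y i) - ballAvg n (f i) x₀ r|) /
            (∑ j, ‖x - y j‖) ^ ((m : ℝ) * (n : ℝ) + β - γ)) :=
        (lintegral_mono_set (compl_pi_closedBall_subset_iUnion_annulus x (by positivity))).trans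
          (lintegral_iUnion_le _ _)
    _ ≤ ∑' k, ENNReal.ofReal (C * (∏ i, (campanato1Norm n (α i) (f i)).toReal) *
          r ^ ((∑ i, α i) + γ) * w k) :=
        ENNReal.tsum_le_tsum fun k =>
          lintegral_dyadic_annulus_le hn hγ hf (fun i => (hfin i).ne) hr hx k
    _ = _ := by
        rw [← ENNReal.ofReal_tsum_of_nonneg (fun k => by positivity) (hw.mul_left _),
          tsum_mul_left]
        congr 1
        ring

/-- integral over the complement of B(x,8r)^m of the product of
deviations against the kernel (Σ|x-y_j|)^{mn+β-γ}. -/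
theorem stmt8 (n m : ℕ) (hn : 1 ≤ n) (hm : 1 ≤ m)
    (β γ : ℝ) (hβ0 : 0 < β) (hβ1 : β ≤ 1) (hγ : γ < β)
    (α : Fin m → ℝ) (hαsum : (∑ i, α i) ≤ 1)
    (hcase : 0 < ∑ i, α i → (∑ i, α i) + γ < β)
    (hsign : ((∀ i, α i < 0) ∧ (∑ i, α i) < 0) ∨ (∀ i, α i = 0) ∨
      ((∀ i, 0 < α i) ∧ 0 < ∑ i, α i)) :
    ∃ c > (0 : ℝ), ∀ f : Fin m → EuclideanSpace ℝ (Fin n) → ℝ,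
      (∀ i, LocallyIntegrable (f i) volume) →
      (∀ i, campanato1Norm n (α i) (f i) < ⊤) →
      ∀ (x₀ x : EuclideanSpace ℝ (Fin n)) (r : ℝ), 0 < r → x ∈ closedBall x₀ r →
        ∫⁻ y in (Set.univ.pi fun _ : Fin m => closedBall x (8 * r))ᶜ,
            ENNReal.ofReal (r ^ β * (∏ i, |f i (y i) - ballAvg n (f i) x₀ r|) /
              (∑ j, ‖x - y j‖) ^ ((m : ℝ) * (n : ℝ) + β - γ)) ≤
          ENNReal.ofReal (c * r ^ ((∑ i, α i) + γ) *
            ∏ i, (campanato1Norm n (α i) (f i)).toReal) :=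
  stmt8_general n m hn β γ hγ α hcase hsign
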